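/- Let n ≥ r ≥ 1 and let w₁, w₂ be two weighted r-uniform hypergraphs on [n] such that wᵢ*([n] \ {j}) ≥ 1 − c for i = 1,2 and all j ∈ [n], where c ∈ (0,1). Then there exists a chain ∅ ⊊ S₁ ⊊ … ⊊ Sₙ = [n] such that |w₁*(S_j) − w₂*(S_j)| ≤ c for all j ∈ [n]. -/

import Mathlib

open Finset

noncomputable def wstar {n : ℕ} (r : ℕ) (w : Finset (Fin n) → ℝ) (S : Finset (Fin n)) : ℝ :=
  ∑ R ∈ S.powerset.filter (fun R => R.card = r), w R

lemma wstar_mono {n r : ℕ} (w : Finset (Fin n) → ℝ) (hw : ∀ R, 0 ≤ w R)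
    {S T : Finset (Fin n)} (h : S ⊆ T) : wstar r w S ≤ wstar r w T := by
  apply Finset.sum_le_sum_of_subset_of_nonneg
  · intro R hR
    simp only [mem_filter, mem_powerset] at *
    exact ⟨hR.1.trans h, hR.2⟩
  · intros; exact hw _

lemma delta_eq {n r : ℕ} (w : Finset (Fin n) → ℝ) {S : Finset (Fin n)} {j : Fin n} (hj : j ∈ S) :
    wstar r w S - wstar r w (S.erase j)
      = ∑ R ∈ S.powerset.filter (fun R => R.card = r ∧ j ∈ R), w R := by
  have h2 : (S.erase j).powerset.filter (fun R => R.card = r)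
      = S.powerset.filter (fun R => R.card = r ∧ j ∉ R) := by
    ext R
    simp only [mem_filter, mem_powerset, Finset.subset_erase]
    tauto
  have h3 : S.powerset.filter (fun R => R.card = r)
      = S.powerset.filter (fun R => R.card = r ∧ j ∈ R)
        ∪ S.powerset.filter (fun R => R.card = r ∧ j ∉ R) := by
    rw [← Finset.filter_or]
    apply Finset.filter_congr
    intro R _
    tauto
  have h4 : Disjoint (S.powerset.filter (fun R => R.card = r ∧ j ∈ R))
      (S.powerset.filter (fun R => R.card = r ∧ j ∉ R)) := by
    rw [Finset.disjoint_left]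
    intro R hR hR'
    simp only [mem_filter] at hR hR'
    exact hR'.2.2 hR.2.2
  rw [wstar, wstar, h2, h3, Finset.sum_union h4]
  ring

lemma delta_sum {n r : ℕ} (w : Finset (Fin n) → ℝ) (S : Finset (Fin n)) :
    ∑ j ∈ S, (wstar r w S - wstar r w (S.erase j)) = r * wstar r w S := by
  have key : ∀ j ∈ S, wstar r w S - wstar r w (S.erase j)
      = ∑ R ∈ S.powerset.filter (fun R => R.card = r), (if j ∈ R then w R else 0) := by
    intro j hj
    rw [delta_eq w hj, ← Finset.sum_filter, Finset.filter_filter]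
  rw [Finset.sum_congr rfl key, Finset.sum_comm]
  rw [wstar, Finset.mul_sum]
  apply Finset.sum_congr rfl
  intro R hR
  simp only [mem_filter, mem_powerset] at hR
  rw [Finset.sum_ite_mem, Finset.inter_eq_right.mpr hR.1, Finset.sum_const,
    nsmul_eq_mul, hR.2]

lemma exists_good {n r : ℕ} (w₁ w₂ : Finset (Fin n) → ℝ) {S : Finset (Fin n)}
    (hS : S.Nonempty) (h : wstar r w₂ S ≤ wstar r w₁ S) :
    ∃ j ∈ S, wstar r w₂ S - wstar r w₂ (S.erase j)
      ≤ wstar r w₁ S - wstar r w₁ (S.erase j) := by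
  by_contra h'
  push_neg at h'
  have hsum := Finset.sum_lt_sum_of_nonempty hS h'
  rw [delta_sum, delta_sum] at hsum
  have : (r : ℝ) * wstar r w₂ S ≤ (r : ℝ) * wstar r w₁ S :=
    mul_le_mul_of_nonneg_left h (by positivity)
  linarith

lemma delta_le {n r : ℕ} {c : ℝ} (w : Finset (Fin n) → ℝ) (hw : ∀ R, 0 ≤ w R)
    (hw1 : wstar r w Finset.univ = 1)
    (hdeg : ∀ j : Fin n, 1 - c ≤ wstar r w (Finset.univ.erase j))
    {S : Finset (Fin n)} {j : Fin n} (hj : j ∈ S) :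
    wstar r w S - wstar r w (S.erase j) ≤ c := by
  rw [delta_eq w hj]
  have h1 : ∑ R ∈ S.powerset.filter (fun R => R.card = r ∧ j ∈ R), w R
      ≤ ∑ R ∈ Finset.univ.powerset.filter (fun R => R.card = r ∧ j ∈ R), w R := by
    apply Finset.sum_le_sum_of_subset_of_nonneg
    · intro R hR
      simp only [mem_filter, mem_powerset] at *
      exact ⟨Finset.subset_univ R, hR.2⟩
    · intros; exact hw _
  have h2 := delta_eq (r := r) w (Finset.mem_univ j)
  have := hdeg j
  linarith
lemma step_main {n r : ℕ} {c : ℝ} (w₁ w₂ : Finset (Fin n) → ℝ)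
    (hw0' : ∀ R, 0 ≤ w₂ R) {S : Finset (Fin n)} (hS : S.Nonempty)
    (hd0 : 0 ≤ wstar r w₁ S - wstar r w₂ S)
    (hdc : wstar r w₁ S - wstar r w₂ S ≤ c)
    (hδ : ∀ j ∈ S, wstar r w₁ S - wstar r w₁ (S.erase j) ≤ c) :
    ∃ j ∈ S, |wstar r w₁ (S.erase j) - wstar r w₂ (S.erase j)| ≤ c := by
  obtain ⟨j, hj, hle⟩ := exists_good w₁ w₂ hS (by linarith)
  refine ⟨j, hj, ?_⟩
  have h2 : wstar r w₂ (S.erase j) ≤ wstar r w₂ S :=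
    wstar_mono w₂ hw0' (Finset.erase_subset j S)
  have h3 := hδ j hj
  rw [abs_le]
  constructor <;> linarith

theorem stmt5 (n r : ℕ) (hr : 1 ≤ r) (hrn : r ≤ n) (c : ℝ) (hc : 0 < c) (hc1 : c < 1)
    (w₁ w₂ : Finset (Fin n) → ℝ)
    (hw0 : ∀ R, 0 ≤ w₁ R) (hw0' : ∀ R, 0 ≤ w₂ R)
    (hw1 : ∑ R ∈ Finset.univ.powerset.filter (fun R => R.card = r), w₁ R = 1)
    (hw1' : ∑ R ∈ Finset.univ.powerset.filter (fun R => R.card = r), w₂ R = 1)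
    (hdeg : ∀ j : Fin n, 1 - c ≤ wstar r w₁ (Finset.univ.erase j))
    (hdeg' : ∀ j : Fin n, 1 - c ≤ wstar r w₂ (Finset.univ.erase j)) :
    ∃ S : Fin n → Finset (Fin n),
      (∀ j, (S j).card = (j : ℕ) + 1) ∧ Monotone S ∧
      S ⟨n - 1, by omega⟩ = Finset.univ ∧
      ∀ j : Fin n, |wstar r w₁ (S j) - wstar r w₂ (S j)| ≤ c := by
  have hn : 1 ≤ n := le_trans hr hrn
  have hU1 : wstar r w₁ (Finset.univ : Finset (Fin n)) = 1 := hw1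
  have hU2 : wstar r w₂ (Finset.univ : Finset (Fin n)) = 1 := hw1'
  have step : ∀ S : Finset (Fin n), S.Nonempty →
      |wstar r w₁ S - wstar r w₂ S| ≤ c →
      ∃ j ∈ S, |wstar r w₁ (S.erase j) - wstar r w₂ (S.erase j)| ≤ c := by
    intro S hS hd
    rw [abs_le] at hd
    rcases le_total (wstar r w₂ S) (wstar r w₁ S) with h | h
    · exact step_main w₁ w₂ hw0' hS (by linarith) hd.2
        (fun j hj => delta_le w₁ hw0 hU1 hdeg hj)
    · obtain ⟨j, hj, hb⟩ := step_main w₂ w₁ hw0 hS (by linarith) (by linarith)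
        (fun j hj => delta_le w₂ hw0' hU2 hdeg' hj)
      exact ⟨j, hj, by rwa [abs_sub_comm]⟩
  have chain : ∀ m : ℕ, m ≤ n - 1 → ∃ g : ℕ → Finset (Fin n),
      (∀ k ≤ m, (g k).card = n - k ∧ |wstar r w₁ (g k) - wstar r w₂ (g k)| ≤ c) ∧
      (∀ k < m, g (k+1) ⊆ g k) := by
    intro m
    induction m with
    | zero =>
      intro _
      refine ⟨fun _ => Finset.univ, ?_, by omega⟩
      intro k hk
      interval_cases k
      refine ⟨by simp, ?_⟩
      rw [hU1, hU2]
      simpa using hc.le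
    | succ m ih =>
      intro hm
      obtain ⟨g, hg1, hg2⟩ := ih (by omega)
      have hcard := (hg1 m le_rfl).1
      have hne : (g m).Nonempty := by
        rw [← Finset.card_pos, hcard]; omega
      obtain ⟨j, hj, hb⟩ := step (g m) hne (hg1 m le_rfl).2
      refine ⟨fun k => if k ≤ m then g k else (g m).erase j, ?_, ?_⟩
      · intro k hk
        by_cases h : k ≤ m
        · simp only [if_pos h]; exact hg1 k h
        · have hkm : k = m + 1 := by omega
          subst hkm
          simp only [if_neg h]
          refine ⟨?_, hb⟩
          rw [Finset.card_erase_of_mem hj, hcard]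
          omega
      · intro k hk
        by_cases h : k + 1 ≤ m
        · simp only [if_pos h, if_pos (by omega : k ≤ m)]
          exact hg2 k (by omega)
        · have hk' : k = m := by omega
          subst hk'
          simp only [if_neg h, if_pos le_rfl]
          exact Finset.erase_subset _ _
  obtain ⟨g, hg1, hg2⟩ := chain (n - 1) le_rfl
  have ganti : ∀ b, b ≤ n - 1 → ∀ a, a ≤ b → g b ⊆ g a := by
    intro b
    induction b with
    | zero =>
      intro _ a ha
      have : a = 0 := by omega
      subst this
      exact Finset.Subset.refl _
    | succ b ih =>
      intro hb a ha
      rcases Nat.eq_or_lt_of_le ha with h | h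
      · rw [← h]
      · exact (hg2 b (by omega)).trans (ih (by omega) a (by omega))
  refine ⟨fun j => g (n - 1 - (j : ℕ)), ?_, ?_, ?_, ?_⟩
  · intro j
    have hj := j.2
    have hcard := (hg1 (n - 1 - (j : ℕ)) (by omega)).1
    show (g (n - 1 - (j : ℕ))).card = (j : ℕ) + 1
    omega
  · intro a b hab
    have hab' : (a : ℕ) ≤ (b : ℕ) := hab
    exact ganti (n - 1 - (a : ℕ)) (by omega) (n - 1 - (b : ℕ)) (by omega)
  · show g (n - 1 - (n - 1)) = Finset.univ
    rw [Nat.sub_self]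
    apply Finset.eq_univ_of_card
    rw [(hg1 0 (Nat.zero_le _)).1]
    simp
  · intro j
    exact (hg1 (n - 1 - (j : ℕ)) (by omega)).2
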